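/- arXiv:1603.04145 — 5 statements merged into one kernel-verified Lean document; each statement's English description precedes it below -/
import Mathlib

section
/- For every m ∈ ℕ₀, the Mordell–Tornheim value ζ_{MT,m+1}(1,1,...,1;1) (with m+1 ones before the semicolon) equals (m+1)!·ζ(m+2), where ζ is the Riemann zeta function. -/
/-!
With `x = 1 - e^{-t}`, the identity `1/N = ∫₀^∞ x^{N-1} e^{-t} dt` turns each term
`1/(v₁⋯v_r (v₁+⋯+v_r))` into `∫₀^∞ (∏ⱼ x^{vⱼ}/vⱼ) · e^{-t}/x dt`. Summing under the integral,
each factor becomes `-log(1 - x) = t`, and `e^{-t}/x = ∑_{k ≥ 1} e^{-kt}`, so the value is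
`∑_{k ≥ 1} ∫₀^∞ t^r e^{-kt} dt = ∑_{k ≥ 1} r!/k^{r+1} = r! ζ(r+1)`.
All interchanges happen in `ℝ≥0∞`, where they need no convergence hypotheses.
-/

open scoped BigOperators

/-- The Mordell–Tornheim r-ple zeta value with natural-number exponents:
`ζ_{MT,r}(a₁,…,a_r; c) = ∑_{m₁,…,m_r ≥ 1} 1/(m₁^{a₁}⋯m_r^{a_r}(m₁+⋯+m_r)^c)`. -/
noncomputable def zMTn (r : ℕ) (a : Fin r → ℕ) (c : ℕ) : ℂ :=
  ∑' m : Fin r → ℕ+,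
    1 / ((∏ j, ((m j : ℕ) : ℂ) ^ (a j)) * (((∑ j, (m j : ℕ)) : ℕ) : ℂ) ^ c)

open MeasureTheory Real Set Filter Topology
open scoped ENNReal

theorem ENNReal.tsum_fin_pi_prod {ι : Type*} (g : ι → ℝ≥0∞) (r : ℕ) :
    ∑' v : Fin r → ι, ∏ j, g (v j) = (∑' i, g i) ^ r := by
  induction r with
  | zero => simp
  | succ r ih =>
    rw [← (Fin.consEquiv fun _ ↦ ι).tsum_eq]
    simp only [Fin.consEquiv_apply, Fin.prod_univ_succ, Fin.cons_zero, Fin.cons_succ]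
    rw [ENNReal.tsum_prod (f := fun (i : ι) (w : Fin r → ι) ↦ g i * ∏ x, g (w x)), pow_succ',
      ← ih, ← ENNReal.tsum_mul_right]
    simp only [ENNReal.tsum_mul_left]

theorem ENNReal.tsum_pnat_ofReal_pow_div {x : ℝ} (hx₀ : 0 ≤ x) (hx₁ : x < 1) :
    ∑' n : ℕ+, ENNReal.ofReal (x ^ (n : ℕ) / (n : ℕ)) =
      ENNReal.ofReal (-Real.log (1 - x)) := by
  have h := hasSum_pow_div_log_of_abs_lt_one (abs_lt.2 ⟨by linarith, hx₁⟩)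
  rw [← h.tsum_eq, ENNReal.ofReal_tsum_of_nonneg (fun n ↦ by positivity) h.summable,
    ← Equiv.pnatEquivNat.symm.tsum_eq]
  simp [Equiv.pnatEquivNat, Nat.succPNat, div_eq_inv_mul]

theorem ENNReal.tsum_ofReal_pow_succ {y : ℝ} (hy₀ : 0 ≤ y) (hy₁ : y < 1) :
    ∑' k : ℕ, ENNReal.ofReal (y ^ (k + 1)) = ENNReal.ofReal (y / (1 - y)) := by
  have h : HasSum (fun k : ℕ ↦ y ^ (k + 1)) (y / (1 - y)) := by
    simpa [← pow_succ', div_eq_mul_inv] using (hasSum_geometric_of_lt_one hy₀ hy₁).mul_left y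
  rw [← h.tsum_eq, ENNReal.ofReal_tsum_of_nonneg (fun k ↦ by positivity) h.summable]

theorem lintegral_one_sub_exp_neg_pow_mul_exp_neg (N : ℕ) :
    ∫⁻ t in Ioi 0, ENNReal.ofReal ((1 - exp (-t)) ^ N * exp (-t)) =
      ENNReal.ofReal (1 / (N + 1)) := by
  have hderiv : ∀ t ∈ Ici (0 : ℝ), HasDerivAt (fun t ↦ (1 - exp (-t)) ^ (N + 1) / (N + 1))
      ((1 - exp (-t)) ^ N * exp (-t)) t := by
    intro t _
    refine (((((hasDerivAt_neg t).exp).const_sub 1).fun_pow (N + 1)).div_const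
      ((N : ℝ) + 1)).congr_deriv ?_
    push_cast
    field_simp
  have hnonneg : ∀ t ∈ Ioi (0 : ℝ), 0 ≤ (1 - exp (-t)) ^ N * exp (-t) := fun t ht ↦ by
    have : exp (-t) ≤ 1 := exp_le_one_iff.2 (by simp at ht ⊢; linarith)
    have : 0 ≤ 1 - exp (-t) := by linarith
    positivity
  have hlim : Tendsto (fun t : ℝ ↦ (1 - exp (-t)) ^ (N + 1) / (N + 1)) atTop
      (𝓝 (1 / (N + 1))) := by
    simpa using
      ((tendsto_exp_neg_atTop_nhds_zero.const_sub 1).pow (N + 1)).div_const ((N : ℝ) + 1)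
  rw [← ofReal_integral_eq_lintegral_ofReal
      (integrableOn_Ioi_deriv_of_nonneg' hderiv hnonneg hlim)
      ((ae_restrict_iff' measurableSet_Ioi).2 (Eventually.of_forall hnonneg)),
    integral_Ioi_of_hasDerivAt_of_nonneg' hderiv hnonneg hlim]
  simp

theorem lintegral_pow_mul_exp_neg_mul (R : ℕ) {a : ℝ} (ha : 0 < a) :
    ∫⁻ t in Ioi 0, ENNReal.ofReal (t ^ R * exp (-(a * t))) =
      ENNReal.ofReal (R.factorial / a ^ (R + 1)) := by
  have hint : IntegrableOn (fun t : ℝ ↦ t ^ R * exp (-(a * t))) (Ioi 0) := by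
    refine (integrableOn_rpow_mul_exp_neg_mul_rpow (p := 1) (s := R)
      (by linarith [R.cast_nonneg (α := ℝ)]) one_pos ha).congr_fun (fun t _ ↦ ?_) measurableSet_Ioi
    simp
  have hval := integral_rpow_mul_exp_neg_mul_Ioi (a := R + 1) (by positivity) ha
  simp only [add_sub_cancel_right, rpow_natCast, Gamma_nat_eq_factorial] at hval
  rw [← Nat.cast_succ, rpow_natCast] at hval
  rw [← ofReal_integral_eq_lintegral_ofReal hint
      ((ae_restrict_iff' measurableSet_Ioi).2
        (Eventually.of_forall fun t (ht : 0 < t) ↦ by positivity)),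
    hval, Nat.succ_eq_add_one, one_div_pow, one_div_mul_eq_div]

noncomputable def mtIntegrand {ι : Type*} [Fintype ι] (v : ι → ℕ+) (t : ℝ) : ℝ≥0∞ :=
  ENNReal.ofReal (exp (-t) / (1 - exp (-t))) *
    ∏ j, ENNReal.ofReal ((1 - exp (-t)) ^ (v j : ℕ) / (v j : ℕ))

theorem measurable_mtIntegrand {ι : Type*} [Fintype ι] (v : ι → ℕ+) :
    Measurable (mtIntegrand v) := by
  unfold mtIntegrand
  fun_prop

theorem one_sub_exp_neg_pos {t : ℝ} (ht : 0 < t) : 0 < 1 - exp (-t) := by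
  linarith [exp_lt_one_iff.2 (neg_lt_zero.2 ht)]

theorem ofReal_one_div_prod_mul_sum_eq_lintegral {ι : Type*} [Fintype ι] [Nonempty ι]
    (v : ι → ℕ+) :
    ENNReal.ofReal (1 / ((∏ j, ((v j : ℕ) : ℝ)) * ∑ j, ((v j : ℕ) : ℝ))) =
      ∫⁻ t in Ioi 0, mtIntegrand v t := by
  set P : ℝ := ∏ j, ((v j : ℕ) : ℝ)
  have hP : 0 < P := Finset.prod_pos fun j _ ↦ by exact_mod_cast (v j).pos
  obtain ⟨N, hN⟩ : ∃ N : ℕ, ∑ j, (v j : ℕ) = N + 1 :=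
    Nat.exists_eq_add_one.2 (Finset.sum_pos (fun j _ ↦ (v j).pos) Finset.univ_nonempty)
  have hN' : ∑ j, ((v j : ℕ) : ℝ) = N + 1 := by exact_mod_cast hN
  calc ENNReal.ofReal (1 / (P * ∑ j, ((v j : ℕ) : ℝ)))
      = ENNReal.ofReal P⁻¹ *
          ∫⁻ t in Ioi 0, ENNReal.ofReal ((1 - exp (-t)) ^ N * exp (-t)) := by
        rw [lintegral_one_sub_exp_neg_pow_mul_exp_neg, ← ENNReal.ofReal_mul (by positivity), hN',
          one_div, mul_inv, one_div]
    _ = ∫⁻ t in Ioi 0, mtIntegrand v t := by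
        rw [← lintegral_const_mul' _ _ ENNReal.ofReal_ne_top]
        refine setLIntegral_congr_fun measurableSet_Ioi fun t ht ↦ ?_
        have hx := one_sub_exp_neg_pos ht
        rw [mtIntegrand, ← ENNReal.ofReal_prod_of_nonneg (fun j _ ↦ by positivity),
          ← ENNReal.ofReal_mul (by positivity), ← ENNReal.ofReal_mul (by positivity),
          Finset.prod_div_distrib, Finset.prod_pow_eq_pow_sum, hN]
        congr 1
        field_simp
        ring

theorem tsum_mtIntegrand (r : ℕ) {t : ℝ} (ht : 0 < t) :
    ∑' v : Fin r → ℕ+, mtIntegrand v t =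
      ∑' k : ℕ, ENNReal.ofReal (t ^ r * exp (-((k + 1) * t))) := by
  have hx := one_sub_exp_neg_pos ht
  have hy : exp (-t) < 1 := exp_lt_one_iff.2 (neg_lt_zero.2 ht)
  have hlog : -Real.log (1 - (1 - exp (-t))) = t := by simp
  calc ∑' v : Fin r → ℕ+, mtIntegrand v t
      = ENNReal.ofReal (exp (-t) / (1 - exp (-t))) * ENNReal.ofReal t ^ r := by
        simp only [mtIntegrand]
        rw [ENNReal.tsum_mul_left,
          ENNReal.tsum_fin_pi_prod fun n : ℕ+ ↦ ENNReal.ofReal ((1 - exp (-t)) ^ (n : ℕ) / (n : ℕ)),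
          ENNReal.tsum_pnat_ofReal_pow_div hx.le (by linarith [exp_pos (-t)]), hlog]
    _ = ∑' k : ℕ, ENNReal.ofReal (t ^ r * exp (-((k + 1) * t))) := by
        rw [← ENNReal.tsum_ofReal_pow_succ (exp_pos _).le hy, ← ENNReal.tsum_mul_right]
        refine tsum_congr fun k ↦ ?_
        rw [← ENNReal.ofReal_pow ht.le, ← ENNReal.ofReal_mul (by positivity), mul_comm,
          ← exp_nat_mul]
        push_cast
        ring_nf

theorem tsum_ofReal_one_div_prod_mul_sum (m : ℕ) :
    ∑' v : Fin (m + 1) → ℕ+,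
        ENNReal.ofReal (1 / ((∏ j, ((v j : ℕ) : ℝ)) * ∑ j, ((v j : ℕ) : ℝ))) =
      ∑' k : ℕ, ENNReal.ofReal ((m + 1).factorial / ((k : ℝ) + 1) ^ (m + 2)) := by
  calc _ = ∑' v : Fin (m + 1) → ℕ+, ∫⁻ t in Ioi 0, mtIntegrand v t :=
        tsum_congr ofReal_one_div_prod_mul_sum_eq_lintegral
    _ = ∫⁻ t in Ioi 0, ∑' v : Fin (m + 1) → ℕ+, mtIntegrand v t :=
        (lintegral_tsum fun v ↦ (measurable_mtIntegrand v).aemeasurable).symm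
    _ = ∫⁻ t in Ioi 0, ∑' k : ℕ, ENNReal.ofReal (t ^ (m + 1) * exp (-((k + 1) * t))) :=
        setLIntegral_congr_fun measurableSet_Ioi fun t ht ↦ tsum_mtIntegrand (m + 1) ht
    _ = ∑' k : ℕ, ∫⁻ t in Ioi 0, ENNReal.ofReal (t ^ (m + 1) * exp (-((k + 1) * t))) :=
        lintegral_tsum fun k ↦ by fun_prop
    _ = _ := tsum_congr fun k ↦ lintegral_pow_mul_exp_neg_mul (m + 1) (by positivity)

theorem hasSum_of_tsum_ofReal_eq {α : Type*} {f : α → ℝ} {c : ℝ} (hf : ∀ a, 0 ≤ f a)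
    (hc : 0 ≤ c) (h : ∑' a, ENNReal.ofReal (f a) = ENNReal.ofReal c) : HasSum f c := by
  have hfin : ∑' a, ENNReal.ofReal (f a) ≠ ⊤ := h ▸ ENNReal.ofReal_ne_top
  have hs : Summable f := by
    simpa only [ENNReal.toReal_ofReal (hf _)] using ENNReal.summable_toReal hfin
  rw [← ENNReal.ofReal_tsum_of_nonneg hf hs,
    ENNReal.ofReal_eq_ofReal_iff (tsum_nonneg hf) hc] at h
  exact h ▸ hs.hasSum

theorem summable_one_div_nat_add_one_pow {k : ℕ} (hk : 1 < k) :
    Summable fun n : ℕ ↦ 1 / ((n : ℝ) + 1) ^ k := by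
  exact_mod_cast (summable_nat_add_iff 1).2 (summable_one_div_nat_pow.2 hk)

theorem hasSum_one_div_prod_mul_sum (m : ℕ) :
    HasSum (fun v : Fin (m + 1) → ℕ+ ↦ 1 / ((∏ j, ((v j : ℕ) : ℝ)) * ∑ j, ((v j : ℕ) : ℝ)))
      ((m + 1).factorial * ∑' k : ℕ, 1 / ((k : ℝ) + 1) ^ (m + 2)) := by
  have hζ := (summable_one_div_nat_add_one_pow (k := m + 2) (by omega)).mul_left
    ((m + 1).factorial : ℝ)
  simp only [mul_one_div] at hζ
  refine hasSum_of_tsum_ofReal_eq (fun v ↦ by positivity) (by positivity) ?_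
  rw [tsum_ofReal_one_div_prod_mul_sum, ← tsum_mul_left,
    ← ENNReal.ofReal_tsum_of_nonneg (fun k ↦ by positivity) hζ]
  simp only [mul_one_div]

theorem riemannZeta_natCast_eq_tsum {k : ℕ} (hk : 1 < k) :
    riemannZeta k = ((∑' n : ℕ, 1 / ((n : ℝ) + 1) ^ k : ℝ) : ℂ) := by
  rw [zeta_eq_tsum_one_div_nat_add_one_cpow (by simpa using hk), Complex.ofReal_tsum]
  push_cast
  simp [Complex.cpow_natCast]

theorem stmt_2 (m : ℕ) :
    zMTn (m + 1) (fun _ => 1) 1 = ((m + 1).factorial : ℂ) * riemannZeta (m + 2) := by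
  have hζ : riemannZeta (m + 2) = ((∑' n : ℕ, 1 / ((n : ℝ) + 1) ^ (m + 2) : ℝ) : ℂ) := by
    exact_mod_cast riemannZeta_natCast_eq_tsum (k := m + 2) (by omega)
  calc zMTn (m + 1) (fun _ => 1) 1
      = ∑' v : Fin (m + 1) → ℕ+,
          ((1 / ((∏ j, ((v j : ℕ) : ℝ)) * ∑ j, ((v j : ℕ) : ℝ)) : ℝ) : ℂ) := by
        simp [zMTn]
    _ = ((m + 1).factorial : ℂ) * riemannZeta (m + 2) := by
        rw [(Complex.hasSum_ofReal.2 (hasSum_one_div_prod_mul_sum m)).tsum_eq, hζ]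
        push_cast
        rfl
end

section
/- For r ∈ ℕ and complex s₂,...,s_r with Re(s_j) > 0 (2 ≤ j ≤ r) and Re(s_{r+1}) > r, one has ζ_{MT,r}(0, s₂, ..., s_r; s_{r+1}) = (1/∏_{j=2}^{r+1} Γ(s_j)) ∫₀^∞···∫₀^∞ [∏_{j=2}^{r+1} t_j^{s_j−1}] / [(e^{t_{r+1}} − 1)·∏_{j=2}^{r} (e^{t_j + t_{r+1}} − 1)] dt₂···dt_{r+1}. -/
/-- The Mordell–Tornheim r-ple zeta function with complex exponents:
`ζ_{MT,r}(s₁,…,s_r; c) = ∑_{m₁,…,m_r ≥ 1} 1/(m₁^{s₁}⋯m_r^{s_r}(m₁+⋯+m_r)^c)`. -/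
noncomputable def zMTc (r : ℕ) (s : Fin r → ℂ) (c : ℂ) : ℂ :=
  ∑' m : Fin r → ℕ+,
    1 / ((∏ j, ((m j : ℕ) : ℂ) ^ (s j)) * (((∑ j, (m j : ℕ)) : ℕ) : ℂ) ^ c)

/-!
Each summand is a product of Gamma integrals `Γ(s) / a ^ s = ∫₀^∞ t ^ (s - 1) e ^ (-a t) dt`:
one for each `m_j ^ (-s_j)`, `j ≥ 2`, in the variable `t_j`, and one for
`(m₁ + ⋯ + m_r) ^ (-s_{r+1})` in the variable `t_{r+1}`. Under the integral sign `m₁` then occurs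
only in `e ^ (-m₁ t_{r+1})` and `m_j` only in `e ^ (-m_j (t_j + t_{r+1}))`, so the sum over `m`
factors into geometric series `∑_{k ≥ 1} e ^ (-k y) = 1 / (e ^ y - 1)`. Summation and integration
may be interchanged because the integrals of the norms give the same series with the exponents
replaced by their real parts, and `(m₁ + ⋯ + m_r) ^ (-σ) ≤ ∏ m_i ^ (-σ / r)` bounds that series by
a product of convergent `p`-series as soon as `σ = Re s_{r+1} > r`.
-/

open Set MeasureTheory Complex

namespace MordellTornheim

lemma norm_cexp_neg_lt_one {z : ℂ} (hz : 0 < z.re) : ‖cexp (-z)‖ < 1 := by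
  rw [norm_exp, neg_re, Real.exp_lt_one_iff]
  linarith

lemma hasSum_cexp_neg_pow_pnat {z : ℂ} (hz : 0 < z.re) :
    HasSum (fun k : ℕ+ => cexp (-z) ^ (k : ℕ)) (1 / (cexp z - 1)) := by
  have hq := norm_cexp_neg_lt_one hz
  have hexp_ne : cexp z - 1 ≠ 0 := by
    intro h
    rw [exp_neg, sub_eq_zero.mp h, inv_one, norm_one] at hq
    exact lt_irrefl _ hq
  have hsum : 1 / (cexp z - 1) + 1 = (1 - cexp (-z))⁻¹ := by
    rw [exp_neg]
    field_simp
    ring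
  rw [hasSum_pnat_iff, pow_zero, hsum]
  exact hasSum_geometric_of_norm_lt_one hq

lemma summable_norm_cexp_neg_pow_pnat {z : ℂ} (hz : 0 < z.re) :
    Summable fun k : ℕ+ => ‖cexp (-z) ^ (k : ℕ)‖ :=
  (summable_norm_geometric_of_norm_lt_one (norm_cexp_neg_lt_one hz)).comp_injective
    PNat.coe_injective

section PiProd

variable {β : Type*}

lemma summable_pi_prod_of_nonneg {r : ℕ} {f : Fin r → β → ℝ} (hf₀ : ∀ i b, 0 ≤ f i b)
    (hf : ∀ i, Summable (f i)) : Summable fun m : Fin r → β => ∏ i, f i (m i) := by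
  induction r with
  | zero => exact .of_finite
  | succ r ih =>
    have tail := ih (f := fun i => f i.succ) (fun i => hf₀ i.succ) fun i => hf i.succ
    refine (Fin.consEquiv fun _ => β).summable_iff.mp ?_
    simpa only [Function.comp_def, Fin.consEquiv_apply, Fin.prod_univ_succ, Fin.cons_zero,
      Fin.cons_succ] using (hf 0).mul_of_nonneg tail (fun b => hf₀ 0 b)
        fun m => Finset.prod_nonneg fun i _ => hf₀ i.succ (m i)

lemma tsum_pi_prod {𝕜 : Type*} [NormedField 𝕜] [CompleteSpace 𝕜] {r : ℕ} {f : Fin r → β → 𝕜}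
    (hf : ∀ i, Summable fun b => ‖f i b‖) :
    ∑' m : Fin r → β, ∏ i, f i (m i) = ∏ i, ∑' b, f i b := by
  induction r with
  | zero => simp
  | succ r ih =>
    rw [← (Fin.consEquiv fun _ => β).tsum_eq]
    simp only [Fin.consEquiv_apply, Fin.prod_univ_succ, Fin.cons_zero, Fin.cons_succ]
    rw [← ih fun i => hf i.succ, tsum_mul_tsum_of_summable_norm (hf 0)]
    simpa only [norm_prod] using
      summable_pi_prod_of_nonneg (fun i b => norm_nonneg (f i.succ b)) fun i => hf i.succ

end PiProd

lemma tsum_prod_cexp_neg_pow {r : ℕ} {y : Fin r → ℂ} (hy : ∀ i, 0 < (y i).re) :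
    ∑' m : Fin r → ℕ+, ∏ i, cexp (-y i) ^ (m i : ℕ) = ∏ i, 1 / (cexp (y i) - 1) := by
  rw [tsum_pi_prod fun i => summable_norm_cexp_neg_pow_pnat (hy i)]
  exact Finset.prod_congr rfl fun i _ => (hasSum_cexp_neg_pow_pnat (hy i)).tsum_eq

lemma summable_one_div_pnat_rpow {e : ℝ} (he : 1 < e) :
    Summable fun k : ℕ+ => (1 / (k : ℝ)) ^ e := by
  refine ((Real.summable_one_div_nat_rpow.mpr he).comp_injective PNat.coe_injective).congr
    fun k => ?_
  simp [Real.inv_rpow (Nat.cast_nonneg (α := ℝ) k)]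

lemma summable_prod_one_div_rpow_mul_one_div_sum_rpow {r : ℕ} {a w : Fin r → ℝ}
    (hw : ∀ i, 0 ≤ w i) (haw : ∀ i, 1 < a i + w i) :
    Summable fun m : Fin r → ℕ+ =>
      (∏ i, (1 / (m i : ℝ)) ^ a i) * (1 / ((∑ i, (m i : ℕ) : ℕ) : ℝ)) ^ ∑ i, w i := by
  refine .of_nonneg_of_le (fun m => by positivity) (fun m => ?_)
    (summable_pi_prod_of_nonneg (f := fun i (k : ℕ+) => (1 / (k : ℝ)) ^ (a i + w i))
      (fun _ _ => by positivity) fun i => summable_one_div_pnat_rpow (haw i))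
  have hm : ∀ i, (0 : ℝ) < m i := fun i => by positivity
  rw [Real.rpow_sum_of_nonneg (by positivity) fun i _ => hw i]
  simp_rw [Real.rpow_add (one_div_pos.mpr (hm _)), Finset.prod_mul_distrib]
  gcongr with i
  · exact hw i
  · exact Finset.single_le_sum (f := fun j => (m j : ℕ)) (fun _ _ => Nat.zero_le _)
      (Finset.mem_univ i)

section OrthantIntegrals

variable {𝕜 : Type*} [RCLike 𝕜] {ι : Type*} [Fintype ι]

lemma setIntegral_univ_pi_prod (f : ι → ℝ → 𝕜) (s : ι → Set ℝ) :
    ∫ x in Set.univ.pi s, ∏ i, f i (x i) = ∏ i, ∫ t in s i, f i t := by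
  rw [volume_pi, Measure.restrict_pi_pi, integral_fintype_prod_eq_prod]

lemma integrableOn_univ_pi_prod {f : ι → ℝ → 𝕜} {s : ι → Set ℝ}
    (hf : ∀ i, IntegrableOn (f i) (s i)) :
    IntegrableOn (fun x : ι → ℝ => ∏ i, f i (x i)) (univ.pi s) := by
  rw [IntegrableOn, volume_pi, Measure.restrict_pi_pi]
  exact .fintype_prod hf

lemma setIntegral_univ_pi_prod_prod_mul (f : ι → ℝ → 𝕜) (g : ℝ → 𝕜) (s : ι → Set ℝ)
    (u : Set ℝ) :
    ∫ p in Set.univ.pi s ×ˢ u, (∏ i, f i (p.1 i)) * g p.2 =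
      (∏ i, ∫ t in s i, f i t) * ∫ t in u, g t := by
  rw [Measure.volume_eq_prod, setIntegral_prod_mul (fun x : ι → ℝ => ∏ i, f i (x i)),
    setIntegral_univ_pi_prod]

lemma integrableOn_univ_pi_prod_prod_mul {f : ι → ℝ → 𝕜} {g : ℝ → 𝕜} {s : ι → Set ℝ}
    {u : Set ℝ} (hf : ∀ i, IntegrableOn (f i) (s i)) (hg : IntegrableOn g u) :
    IntegrableOn (fun p : (ι → ℝ) × ℝ => (∏ i, f i (p.1 i)) * g p.2) (univ.pi s ×ˢ u) := by
  rw [IntegrableOn, Measure.volume_eq_prod, ← Measure.prod_restrict]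
  exact (integrableOn_univ_pi_prod hf).mul_prod hg

end OrthantIntegrals

noncomputable def gammaKernel (s : ℂ) (a t : ℝ) : ℂ := (t : ℂ) ^ (s - 1) * cexp (-(a * t))

section GammaKernel

variable {s : ℂ} {a : ℝ}

lemma integral_gammaKernel (hs : 0 < s.re) (ha : 0 < a) :
    ∫ t in Ioi 0, gammaKernel s a t = (1 / a) ^ s * Gamma s :=
  integral_cpow_mul_exp_neg_mul_Ioi hs ha

lemma integrableOn_gammaKernel (hs : 0 < s.re) (ha : 0 < a) :
    IntegrableOn (gammaKernel s a) (Ioi 0) :=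
  .of_integral_ne_zero <| by
    rw [integral_gammaKernel hs ha]
    exact mul_ne_zero (by simp [cpow_eq_zero_iff, ha.ne']) (Gamma_ne_zero_of_re_pos hs)

lemma norm_gammaKernel {t : ℝ} (ht : 0 < t) :
    ‖gammaKernel s a t‖ = t ^ (s.re - 1) * Real.exp (-(a * t)) := by
  rw [gammaKernel, norm_mul, norm_cpow_eq_rpow_re_of_pos ht, norm_exp, sub_re, one_re]
  norm_cast

lemma integral_norm_gammaKernel (hs : 0 < s.re) (ha : 0 < a) :
    ∫ t in Ioi 0, ‖gammaKernel s a t‖ = (1 / a) ^ s.re * Real.Gamma s.re := by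
  rw [setIntegral_congr_fun measurableSet_Ioi fun t ht => norm_gammaKernel ht]
  exact Real.integral_rpow_mul_exp_neg_mul_Ioi hs ha

end GammaKernel

section Kernel

variable {n : ℕ}

noncomputable def mtKernel (sv : Fin n → ℂ) (c : ℂ) (m : Fin (n + 1) → ℕ+)
    (p : (Fin n → ℝ) × ℝ) : ℂ :=
  (∏ j, gammaKernel (sv j) (m j.succ) (p.1 j)) * gammaKernel c (∑ i, (m i : ℕ) : ℕ) p.2

variable {sv : Fin n → ℂ} {c : ℂ}

lemma integrableOn_mtKernel (hsv : ∀ j, 0 < (sv j).re) (hc : 0 < c.re)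
    (m : Fin (n + 1) → ℕ+) :
    IntegrableOn (mtKernel sv c m) (Set.univ.pi (fun _ => Ioi 0) ×ˢ Ioi 0) :=
  integrableOn_univ_pi_prod_prod_mul (fun j => integrableOn_gammaKernel (hsv j) (by positivity))
    (integrableOn_gammaKernel hc (by positivity))

lemma setIntegral_mtKernel (hsv : ∀ j, 0 < (sv j).re) (hc : 0 < c.re)
    (m : Fin (n + 1) → ℕ+) :
    ∫ p in Set.univ.pi (fun _ => Ioi 0) ×ˢ Ioi 0, mtKernel sv c m p =
      (Gamma c * ∏ j, Gamma (sv j)) *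
        (1 / ((∏ i, ((m i : ℕ) : ℂ) ^ (Fin.cons 0 sv : Fin (n + 1) → ℂ) i) *
          (((∑ i, (m i : ℕ)) : ℕ) : ℂ) ^ c)) := by
  simp only [mtKernel]
  rw [setIntegral_univ_pi_prod_prod_mul, integral_gammaKernel hc (by positivity),
    Finset.prod_congr rfl fun j _ => integral_gammaKernel (hsv j) (by positivity)]
  simp only [one_div, fun k : ℕ => inv_cpow_ofReal_nonneg (Nat.cast_nonneg (α := ℝ) k)]
  simp only [Fin.prod_univ_succ, Fin.cons_zero, Fin.cons_succ, cpow_zero, one_mul, ofReal_natCast,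
    Finset.prod_mul_distrib, Finset.prod_inv_distrib, mul_inv]
  ring

lemma setIntegral_norm_mtKernel (hsv : ∀ j, 0 < (sv j).re) (hc : 0 < c.re)
    (m : Fin (n + 1) → ℕ+) :
    ∫ p in Set.univ.pi (fun _ => Ioi 0) ×ˢ Ioi 0, ‖mtKernel sv c m p‖ =
      (∏ j, (1 / (m j.succ : ℝ)) ^ (sv j).re * Real.Gamma (sv j).re) *
        ((1 / ((∑ i, (m i : ℕ) : ℕ) : ℝ)) ^ c.re * Real.Gamma c.re) := by
  simp only [mtKernel, norm_mul, norm_prod]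
  refine (setIntegral_univ_pi_prod_prod_mul (fun j t => ‖gammaKernel (sv j) (m j.succ) t‖)
    (fun t => ‖gammaKernel c (∑ i, (m i : ℕ) : ℕ) t‖) _ _).trans ?_
  rw [integral_norm_gammaKernel hc (by positivity),
    Finset.prod_congr rfl fun j _ => integral_norm_gammaKernel (hsv j) (by positivity)]

lemma summable_integral_norm_mtKernel (hsv : ∀ j, 0 < (sv j).re) (hc : (n : ℝ) + 1 < c.re) :
    Summable fun m : Fin (n + 1) → ℕ+ =>
      ∫ p in Set.univ.pi (fun _ => Ioi 0) ×ˢ Ioi 0, ‖mtKernel sv c m p‖ := by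
  have hc₀ : 0 < c.re := by linarith [n.cast_nonneg (α := ℝ)]
  have hq : 1 < c.re / (n + 1) := by rw [one_lt_div (by positivity)]; exact hc
  have h := summable_prod_one_div_rpow_mul_one_div_sum_rpow (r := n + 1)
    (a := Fin.cons 0 fun j => (sv j).re) (w := fun _ => c.re / (n + 1)) (fun _ => by positivity)
    (Fin.cases (by simpa using hq) fun j => by
      simp only [Fin.cons_succ]; linarith [hsv j])
  refine (h.mul_left (Real.Gamma c.re * ∏ j, Real.Gamma (sv j).re)).congr fun m => ?_
  rw [setIntegral_norm_mtKernel hsv hc₀]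
  simp only [Fin.prod_univ_succ, Fin.cons_zero, Fin.cons_succ, Real.rpow_zero, one_mul,
    Finset.sum_const, Finset.card_univ, Fintype.card_fin, nsmul_eq_mul, Finset.prod_mul_distrib]
  push_cast
  rw [mul_div_cancel₀ _ (by positivity)]
  ring

lemma mtKernel_apply (m : Fin (n + 1) → ℕ+) (x : Fin n → ℝ) (t : ℝ) :
    mtKernel sv c m (x, t) = ((∏ j, (x j : ℂ) ^ (sv j - 1)) * (t : ℂ) ^ (c - 1)) *
      ∏ i, cexp (-(Fin.cons (t : ℂ) (fun j => ((x j + t : ℝ) : ℂ)) : Fin (n + 1) → ℂ) i) ^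
        (m i : ℕ) := by
  simp only [mtKernel, gammaKernel, ← exp_nat_mul, Finset.prod_mul_distrib, ← exp_sum]
  rw [mul_mul_mul_comm, ← exp_add]
  congr 2
  push_cast [Fin.sum_univ_succ, Fin.cons_zero, Fin.cons_succ]
  simp only [mul_neg, mul_add, neg_add, Finset.sum_add_distrib, ← Finset.sum_mul,
    Finset.sum_neg_distrib]
  ring

lemma integrand_eq_tsum_mtKernel {p : (Fin n → ℝ) × ℝ}
    (hp : p ∈ Set.univ.pi (fun _ => Ioi 0) ×ˢ Ioi 0) :
    ((∏ j, ((p.1 j : ℂ) ^ (sv j - 1))) * (p.2 : ℂ) ^ (c - 1)) /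
        (((Real.exp p.2 : ℂ) - 1) * ∏ j, ((Real.exp (p.1 j + p.2) : ℂ) - 1)) =
      ∑' m, mtKernel sv c m p := by
  obtain ⟨x, t⟩ := p
  obtain ⟨hx, ht : 0 < t⟩ := hp
  have hrates :
      ∀ i, 0 < ((Fin.cons (t : ℂ) (fun j => ((x j + t : ℝ) : ℂ)) : Fin (n + 1) → ℂ) i).re :=
    Fin.cases (by simpa using ht) fun j => by
      rw [Fin.cons_succ, ofReal_re]; exact add_pos (hx j trivial) ht
  simp_rw [mtKernel_apply, tsum_mul_left, tsum_prod_cexp_neg_pow hrates]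
  simp only [Fin.prod_univ_succ, Fin.cons_zero, Fin.cons_succ, ofReal_exp, div_eq_mul_inv,
    one_mul, mul_inv, Finset.prod_inv_distrib]

end Kernel

end MordellTornheim

open MordellTornheim

/- Here `r = n + 1`; the exponent tuple is `(0, s₂, …, s_r)` given by `Fin.cons 0 sv`,
the variables `p.1 j` play the role of `t_{j+2}` and `p.2` of `t_{r+1}`. -/
theorem stmt_8 (n : ℕ) (sv : Fin n → ℂ) (c : ℂ)
    (h1 : ∀ j, 0 < (sv j).re) (h2 : ((n : ℝ) + 1) < c.re) :
    zMTc (n + 1) (Fin.cons 0 sv) c =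
      (1 / (Complex.Gamma c * ∏ j, Complex.Gamma (sv j))) *
        ∫ p : (Fin n → ℝ) × ℝ in
            (Set.univ.pi fun _ => Set.Ioi (0 : ℝ)) ×ˢ Set.Ioi (0 : ℝ),
          ((∏ j, ((p.1 j : ℂ) ^ (sv j - 1))) * (p.2 : ℂ) ^ (c - 1)) /
            (((Real.exp p.2 : ℂ) - 1) * ∏ j, ((Real.exp (p.1 j + p.2) : ℂ) - 1)) := by
  have hc : 0 < c.re := by linarith [n.cast_nonneg (α := ℝ)]
  have hΓ : Gamma c * ∏ j, Gamma (sv j) ≠ 0 :=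
    mul_ne_zero (Gamma_ne_zero_of_re_pos hc)
      (Finset.prod_ne_zero_iff.mpr fun j _ => Gamma_ne_zero_of_re_pos (h1 j))
  rw [setIntegral_congr_fun (.prod (.univ_pi fun _ => measurableSet_Ioi) measurableSet_Ioi)
      fun p hp => integrand_eq_tsum_mtKernel hp,
    ← integral_tsum_of_summable_integral_norm (integrableOn_mtKernel h1 hc)
      (summable_integral_norm_mtKernel h1 h2)]
  simp_rw [setIntegral_mtKernel h1 hc, tsum_mul_left, zMTc]
  rw [← mul_assoc, one_div_mul_cancel hΓ, one_mul]
end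

section
/- For 𝕜 = (k₁,...,k_r) ∈ ℕ^r with all k_j ≥ 1, the integral ∫₀^∞ t^{s−1}/(e^t − 1) · ∏_{j=1}^r Li_{k_j}(1 − e^{−t}) dt converges absolutely for every s ∈ ℂ with Re(s) > 1 − r. -/
open scoped BigOperators

/-- The polylogarithm `Li_k(z) = ∑_{m ≥ 1} z^m / m^k`. -/
noncomputable def Li (k : ℕ) (z : ℂ) : ℂ := ∑' m : ℕ+, z ^ (m : ℕ) / ((m : ℕ) : ℂ) ^ k

open MeasureTheory Set Filter

/-!
For `‖z‖ < 1` and `k ≥ 1` the series of `Li_k z` is dominated termwise by `∑ ‖z‖^m / m`,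
so `‖Li_k z‖ ≤ -log (1 - ‖z‖)`; at `z = 1 - e^{-t}` this gives `‖Li_k (1 - e^{-t})‖ ≤ t`.
Hence the integrand is dominated by `t^a / (e^t - 1)` with `a = Re s - 1 + r > 0`, and
`e^t - 1 ≥ t e^t / (1 + t)` bounds this by `e^{-t} (t^{a-1} + t^a)`, a sum of two Gamma integrands.
-/

lemma Real.hasSum_pnat_pow_div_neg_log {x : ℝ} (hx : |x| < 1) :
    HasSum (fun m : ℕ+ => x ^ (m : ℕ) / (m : ℕ)) (-Real.log (1 - x)) := by
  refine Equiv.pnatEquivNat.symm.hasSum_iff.mp ?_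
  convert Real.hasSum_pow_div_log_of_abs_lt_one hx using 2 with n
  simp [Equiv.pnatEquivNat, Nat.succPNat]

-- The exponent `a + 1 - 1` matches the integrand of `Real.GammaIntegral_convergent`.
lemma Real.rpow_div_exp_sub_one_le (a : ℝ) {t : ℝ} (ht : 0 < t) :
    t ^ a / (Real.exp t - 1) ≤ Real.exp (-t) * t ^ (a - 1) + Real.exp (-t) * t ^ (a + 1 - 1) := by
  have ht1 : 0 < Real.exp t - 1 := sub_pos.mpr (Real.one_lt_exp_iff.mpr ht)
  have key : t * Real.exp t ≤ (1 + t) * (Real.exp t - 1) := by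
    nlinarith [Real.add_one_le_exp t]
  rw [add_sub_cancel_right, Real.rpow_sub_one ht.ne', Real.exp_neg, div_le_iff₀ ht1]
  calc t ^ a = t ^ a * 1 := (mul_one _).symm
    _ ≤ t ^ a * ((1 + t) * (Real.exp t - 1) / (t * Real.exp t)) := by
        gcongr
        exact (one_le_div (by positivity)).mpr key
    _ = _ := by field_simp

lemma integrableOn_rpow_div_exp_sub_one {a : ℝ} (ha : 0 < a) :
    IntegrableOn (fun t : ℝ => t ^ a / (Real.exp t - 1)) (Ioi 0) := by
  refine ((Real.GammaIntegral_convergent ha).add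
    (Real.GammaIntegral_convergent (s := a + 1) (by linarith))).mono'
    (by fun_prop : Measurable _).aestronglyMeasurable ?_
  filter_upwards [self_mem_ae_restrict measurableSet_Ioi] with t (ht : 0 < t)
  have ht1 : 0 < Real.exp t - 1 := sub_pos.mpr (Real.one_lt_exp_iff.mpr ht)
  rw [Real.norm_of_nonneg (by positivity)]
  exact Real.rpow_div_exp_sub_one_le a ht

lemma norm_cpow_div_exp_sub_one (s : ℂ) {t : ℝ} (ht : 0 < t) :
    ‖(t : ℂ) ^ s / ((Real.exp t : ℂ) - 1)‖ = t ^ s.re / (Real.exp t - 1) := by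
  have ht1 : 0 < Real.exp t - 1 := sub_pos.mpr (Real.one_lt_exp_iff.mpr ht)
  rw [norm_div, Complex.norm_cpow_eq_rpow_re_of_pos ht, ← Complex.ofReal_one,
    ← Complex.ofReal_sub, Complex.norm_of_nonneg ht1.le]

lemma norm_one_sub_exp_neg {t : ℝ} (ht : 0 ≤ t) :
    ‖1 - (Real.exp (-t) : ℂ)‖ = 1 - Real.exp (-t) := by
  rw [← Complex.ofReal_one, ← Complex.ofReal_sub, Complex.norm_of_nonneg]
  simpa using ht

lemma norm_one_sub_exp_neg_lt_one {t : ℝ} (ht : 0 ≤ t) : ‖1 - (Real.exp (-t) : ℂ)‖ < 1 := by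
  rw [norm_one_sub_exp_neg ht]
  linarith [Real.exp_pos (-t)]

section Polylog

variable {k : ℕ} {z : ℂ}

lemma norm_Li_term_le_pow (m : ℕ+) :
    ‖z ^ (m : ℕ) / ((m : ℕ) : ℂ) ^ k‖ ≤ ‖z‖ ^ (m : ℕ) := by
  rw [norm_div, norm_pow, norm_pow, Complex.norm_natCast]
  exact div_le_self (by positivity) (one_le_pow₀ (Nat.one_le_cast.mpr m.pos))

lemma norm_Li_term_le_pow_div (hk : 1 ≤ k) (m : ℕ+) :
    ‖z ^ (m : ℕ) / ((m : ℕ) : ℂ) ^ k‖ ≤ ‖z‖ ^ (m : ℕ) / (m : ℕ) := by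
  rw [norm_div, norm_pow, norm_pow, Complex.norm_natCast]
  gcongr
  exact le_self_pow₀ (Nat.one_le_cast.mpr m.pos) (by omega)

lemma summable_norm_Li_term (k : ℕ) (hz : ‖z‖ < 1) :
    Summable fun m : ℕ+ => ‖z ^ (m : ℕ) / ((m : ℕ) : ℂ) ^ k‖ :=
  .of_nonneg_of_le (fun _ => norm_nonneg _) norm_Li_term_le_pow
    ((summable_geometric_of_lt_one (norm_nonneg z) hz).comp_injective PNat.coe_injective)

lemma hasSum_Li (k : ℕ) (hz : ‖z‖ < 1) :
    HasSum (fun m : ℕ+ => z ^ (m : ℕ) / ((m : ℕ) : ℂ) ^ k) (Li k z) :=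
  (summable_norm_Li_term k hz).of_norm.hasSum

lemma norm_Li_le_neg_log (hk : 1 ≤ k) (hz : ‖z‖ < 1) :
    ‖Li k z‖ ≤ -Real.log (1 - ‖z‖) :=
  (norm_tsum_le_tsum_norm (summable_norm_Li_term k hz)).trans <|
    hasSum_le (norm_Li_term_le_pow_div hk) (summable_norm_Li_term k hz).hasSum
      (Real.hasSum_pnat_pow_div_neg_log (by rwa [abs_norm]))

lemma norm_Li_one_sub_exp_neg_le (hk : 1 ≤ k) {t : ℝ} (ht : 0 ≤ t) :
    ‖Li k (1 - Real.exp (-t))‖ ≤ t := by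
  have h := norm_Li_le_neg_log hk (norm_one_sub_exp_neg_lt_one ht)
  rwa [norm_one_sub_exp_neg ht, sub_sub_cancel, Real.log_exp, neg_neg] at h

end Polylog

lemma norm_prod_Li_one_sub_exp_neg_le {ι : Type*} (S : Finset ι) {k : ι → ℕ}
    (hk : ∀ j ∈ S, 1 ≤ k j) {t : ℝ} (ht : 0 ≤ t) :
    ‖∏ j ∈ S, Li (k j) (1 - Real.exp (-t))‖ ≤ t ^ S.card :=
  calc ‖∏ j ∈ S, Li (k j) (1 - Real.exp (-t))‖
      ≤ ∏ j ∈ S, ‖Li (k j) (1 - Real.exp (-t))‖ := Finset.norm_prod_le _ _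
    _ ≤ ∏ _j ∈ S, t :=
        Finset.prod_le_prod (fun _ _ => norm_nonneg _)
          fun j hj => norm_Li_one_sub_exp_neg_le (hk j hj) ht
    _ = t ^ S.card := Finset.prod_const t

lemma MeasureTheory.AEStronglyMeasurable.Li {α : Type*} [MeasurableSpace α]
    {μ : Measure α} {f : α → ℂ} (hf : AEStronglyMeasurable f μ) (hf_lt : ∀ᵐ x ∂μ, ‖f x‖ < 1)
    (k : ℕ) : AEStronglyMeasurable (fun x => Li k (f x)) μ :=
  aestronglyMeasurable_of_tendsto_ae atTop
    (f := fun (S : Finset ℕ+) x => ∑ m ∈ S, f x ^ (m : ℕ) / ((m : ℕ) : ℂ) ^ k)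
    (fun S => Finset.aestronglyMeasurable_fun_sum S fun m _ => by fun_prop)
    (hf_lt.mono fun _ hx => hasSum_Li k hx)

theorem stmt_11 (r : ℕ) (k : Fin r → ℕ) (hk : ∀ j, 1 ≤ k j) (s : ℂ)
    (hs : 1 - (r : ℝ) < s.re) :
    MeasureTheory.IntegrableOn
      (fun t : ℝ =>
        (t : ℂ) ^ (s - 1) / ((Real.exp t : ℂ) - 1) * ∏ j, Li (k j) (1 - Real.exp (-t)))
      (Set.Ioi 0) := by
  refine (integrableOn_rpow_div_exp_sub_one (a := s.re - 1 + r) (by linarith)).mono' ?_ ?_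
  · have hLi : ∀ᵐ t ∂volume.restrict (Ioi (0 : ℝ)), ‖1 - (Real.exp (-t) : ℂ)‖ < 1 :=
      ae_restrict_of_forall_mem measurableSet_Ioi fun _ ht =>
        norm_one_sub_exp_neg_lt_one (le_of_lt ht)
    exact ((by fun_prop : Measurable fun t : ℝ => (t : ℂ) ^ (s - 1) / ((Real.exp t : ℂ) - 1))
      |>.aestronglyMeasurable).mul <| Finset.aestronglyMeasurable_fun_prod _ fun j _ =>
        AEStronglyMeasurable.Li (by fun_prop) hLi (k j)
  filter_upwards [self_mem_ae_restrict measurableSet_Ioi] with t (ht : 0 < t)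
  have hprod := norm_prod_Li_one_sub_exp_neg_le Finset.univ (fun j _ => hk j) ht.le
  rw [Finset.card_univ, Fintype.card_fin] at hprod
  rw [norm_mul, norm_cpow_div_exp_sub_one _ ht, Complex.sub_re, Complex.one_re,
    Real.rpow_add ht, Real.rpow_natCast, mul_div_right_comm]
  have ht1 : 0 < Real.exp t - 1 := sub_pos.mpr (Real.one_lt_exp_iff.mpr ht)
  gcongr
end

section
/- For 𝕜 = (k₁,...,k_r) ∈ ℕ^r with all k_j ≥ 1 and m ∈ ℕ₀, ξ_{MT}(𝕜; m+1) = (1/m!)·ζ_{MT,m+r}(k₁,...,k_r,1,...,1;1), where there are m ones between k_r and the semicolon. -/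
open scoped BigOperators

/-- The Mordell–Tornheim analogue of the Arakawa–Kaneko zeta function. -/
noncomputable def xiMT (r : ℕ) (k : Fin r → ℕ) (s : ℂ) : ℂ :=
  (1 / Complex.Gamma s) *
    ∫ t in Set.Ioi (0 : ℝ),
      (t : ℂ) ^ (s - 1) / ((Real.exp t : ℂ) - 1) * ∏ j, Li (k j) (1 - Real.exp (-t))

open MeasureTheory Set Filter Real Topology

/-!
With `x = 1 - e^{-t}` one has `Li_1(x) = t` and `1 / (e^t - 1) = e^{-t} / x`, so the integrand of
`ξ_MT(𝕜; m + 1)` is `t^m / (e^t - 1) ∏ Li_{k_j}(x) = e^{-t} / x · ∏ Li_{a_j}(x)`, where `a` is `𝕜`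
followed by `m` ones. Expanding the product of the series gives
`∑_v e^{-t} x^{|v| - 1} / ∏ v_j^{a_j}`, and `∫_0^∞ e^{-t} (1 - e^{-t})^{|v| - 1} dt = 1 / |v|`.
All terms are nonnegative, so integral and sum may be swapped (by Tonelli, even when the series
diverges, both sides then being `0` by convention). Finally `Γ(m + 1) = m!`.
For `r = m = 0` both sides are `0`: the integral diverges at `t = 0`, and the empty
Mordell–Tornheim sum is the single term `1 / 0`.
-/

theorem integral_eq_tsum_integral_of_hasSum_of_nonneg {α ι : Type*} [MeasurableSpace α]
    {μ : Measure α} [Countable ι] {f : ι → α → ℝ} {F : α → ℝ}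
    (hf : ∀ i, Integrable (f i) μ) (hf_nonneg : ∀ i, 0 ≤ᵐ[μ] f i)
    (hF : ∀ᵐ a ∂μ, HasSum (fun i ↦ f i a) (F a)) :
    ∫ a, F a ∂μ = ∑' i, ∫ a, f i a ∂μ := by
  have hf_nonneg' : ∀ᵐ a ∂μ, ∀ i, 0 ≤ f i a := ae_all_iff.2 hf_nonneg
  have hF_nonneg : 0 ≤ᵐ[μ] F := by
    filter_upwards [hF, hf_nonneg'] with a ha h0 using ha.nonneg h0
  have hofReal : ∀ᵐ a ∂μ, ENNReal.ofReal (F a) = ∑' i, ENNReal.ofReal (f i a) := by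
    filter_upwards [hF, hf_nonneg'] with a ha h0
    rw [← ha.tsum_eq, ENNReal.ofReal_tsum_of_nonneg h0 ha.summable]
  have hf_meas : ∀ i, AEMeasurable (fun a ↦ ENNReal.ofReal (f i a)) μ :=
    fun i ↦ (hf i).aemeasurable.ennreal_ofReal
  have hF_meas : AEStronglyMeasurable F μ := by
    have h := (AEMeasurable.tsum (L := SummationFilter.unconditional ι) hf_meas).ennreal_toReal
    refine (h.congr ?_).aestronglyMeasurable
    filter_upwards [hofReal, hF_nonneg] with a ha h0
    rw [← ha, ENNReal.toReal_ofReal h0]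
  calc ∫ a, F a ∂μ = (∫⁻ a, ENNReal.ofReal (F a) ∂μ).toReal :=
        integral_eq_lintegral_of_nonneg_ae hF_nonneg hF_meas
    _ = (∑' i, ENNReal.ofReal (∫ a, f i a ∂μ)).toReal := by
        rw [lintegral_congr_ae hofReal, lintegral_tsum hf_meas]
        simp only [ofReal_integral_eq_lintegral_ofReal (hf _) (hf_nonneg _)]
    _ = ∑' i, ∫ a, f i a ∂μ := by
        rw [ENNReal.tsum_toReal_eq fun _ ↦ ENNReal.ofReal_ne_top]
        simp only [ENNReal.toReal_ofReal (integral_nonneg_of_ae (hf_nonneg _))]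

theorem hasSum_prod_of_nonneg {β : Type*} {N : ℕ} {f : Fin N → β → ℝ} {s : Fin N → ℝ}
    (hs : ∀ j, HasSum (f j) (s j)) (h0 : ∀ j b, 0 ≤ f j b) :
    HasSum (fun v : Fin N → β ↦ ∏ j, f j (v j)) (∏ j, s j) := by
  induction N with
  | zero => simp
  | succ N ih =>
    set tail := fun v : Fin N → β ↦ ∏ j, f j.succ (v j)
    have htail : HasSum tail (∏ j : Fin N, s j.succ) := ih (fun j ↦ hs j.succ) (fun j ↦ h0 j.succ)
    have hsum : Summable fun x : β × (Fin N → β) ↦ f 0 x.1 * tail x.2 :=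
      (hs 0).summable.mul_of_nonneg htail.summable (h0 0)
        fun v ↦ Finset.prod_nonneg fun j _ ↦ h0 j.succ (v j)
    rw [Fin.prod_univ_succ, ← (Fin.consEquiv fun _ ↦ β).hasSum_iff]
    refine ((hs 0).mul htail hsum).congr_fun fun x ↦ ?_
    simp [tail, Fin.prod_univ_succ]

noncomputable def realLi (k : ℕ) (x : ℝ) : ℝ := ∑' n : ℕ+, x ^ (n : ℕ) / ((n : ℕ) : ℝ) ^ k

@[norm_cast]
theorem ofReal_realLi (k : ℕ) (x : ℝ) : (realLi k x : ℂ) = Li k x := by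
  rw [Li, realLi, Complex.ofReal_tsum]
  push_cast
  rfl

theorem hasSum_realLi (k : ℕ) {x : ℝ} (hx : |x| < 1) :
    HasSum (fun n : ℕ+ ↦ x ^ (n : ℕ) / ((n : ℕ) : ℝ) ^ k) (realLi k x) := by
  refine Summable.hasSum <| Summable.of_norm_bounded
    ((summable_geometric_of_lt_one (abs_nonneg x) hx).comp_injective PNat.coe_injective) fun n ↦ ?_
  rw [norm_div, norm_pow, Real.norm_eq_abs, norm_pow, Real.norm_natCast]
  exact div_le_self (by positivity) (one_le_pow₀ (Nat.one_le_cast.2 n.pos))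

theorem realLi_one {x : ℝ} (hx : |x| < 1) : realLi 1 x = -log (1 - x) := by
  refine (hasSum_realLi 1 hx).unique ?_
  rw [hasSum_pnat_iff_hasSum_succ (f := fun n : ℕ ↦ x ^ n / (n : ℝ) ^ 1)]
  simpa using hasSum_pow_div_log_of_abs_lt_one hx

theorem hasSum_prod_realLi {N : ℕ} (a : Fin N → ℕ) {x : ℝ} (hx₀ : 0 ≤ x) (hx₁ : x < 1) :
    HasSum (fun v : Fin N → ℕ+ ↦ x ^ (∑ j, (v j : ℕ)) / ∏ j, ((v j : ℕ) : ℝ) ^ a j)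
      (∏ j, realLi (a j) x) := by
  convert hasSum_prod_of_nonneg (fun j ↦ hasSum_realLi (a j) (abs_lt.2 ⟨by linarith, hx₁⟩))
    (fun j n ↦ by positivity) using 2 with v
  rw [Finset.prod_div_distrib, Finset.prod_pow_eq_pow_sum]

theorem integrableOn_exp_neg_mul_one_sub_exp_neg_pow (n : ℕ) :
    IntegrableOn (fun t ↦ exp (-t) * (1 - exp (-t)) ^ n) (Ioi 0) := by
  refine (integrableOn_exp_neg_Ioi 0).mono' (by fun_prop) ?_
  filter_upwards [ae_restrict_mem measurableSet_Ioi] with t ht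
  have hx₀ : 0 ≤ 1 - exp (-t) := by simp [mem_Ioi.1 ht |>.le]
  rw [Real.norm_of_nonneg (by positivity)]
  exact mul_le_of_le_one_right (exp_pos _).le
    (pow_le_one₀ hx₀ (sub_le_self _ (exp_pos _).le))

theorem integral_exp_neg_mul_one_sub_exp_neg_pow (n : ℕ) :
    ∫ t in Ioi 0, exp (-t) * (1 - exp (-t)) ^ n = 1 / (n + 1) := by
  have hderiv (t : ℝ) : HasDerivAt (fun t ↦ (1 - exp (-t)) ^ (n + 1) / (n + 1))
      (exp (-t) * (1 - exp (-t)) ^ n) t := by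
    have h : HasDerivAt (fun t ↦ 1 - exp (-t)) (exp (-t)) t := by
      simpa using ((hasDerivAt_neg t).exp).const_sub 1
    refine ((h.fun_pow (n + 1)).div_const ((n : ℝ) + 1)).congr_deriv ?_
    push_cast
    field_simp
  have hlim : Tendsto (fun t ↦ (1 - exp (-t)) ^ (n + 1) / (n + 1)) atTop (𝓝 (1 / (n + 1))) := by
    simpa using ((tendsto_exp_neg_atTop_nhds_zero.const_sub 1).pow (n + 1)).div_const
      ((n : ℝ) + 1)
  rw [integral_Ioi_of_hasDerivAt_of_tendsto' (fun t _ ↦ hderiv t)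
    (integrableOn_exp_neg_mul_one_sub_exp_neg_pow n) hlim]
  simp

theorem not_integrableOn_exp_neg_div_one_sub_exp_neg :
    ¬ IntegrableOn (fun t ↦ exp (-t) / (1 - exp (-t))) (Ioi 0) := by
  intro h
  suffices IntervalIntegrable (fun t : ℝ ↦ t⁻¹) volume 0 1 by simp at this
  rw [intervalIntegrable_iff_integrableOn_Ioc_of_le zero_le_one]
  refine ((h.mono_set Ioc_subset_Ioi_self).const_mul (exp 1)).mono' (by fun_prop) ?_
  filter_upwards [ae_restrict_mem measurableSet_Ioc] with t ⟨ht₀, ht₁⟩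
  -- on `(0, 1]`: `t⁻¹ ≤ e^{1-t} / (1 - e^{-t})` because `1 - e^{-t} ≤ t ≤ t e^{1-t}`
  have hx₀ : 0 < 1 - exp (-t) := by simpa using ht₀
  rw [Real.norm_of_nonneg (inv_nonneg.2 ht₀.le), mul_div_assoc', le_div_iff₀ hx₀,
    ← exp_add, inv_mul_le_iff₀ ht₀]
  calc 1 - exp (-t) ≤ t := by linarith [add_one_le_exp (-t)]
    _ ≤ t * exp (1 + -t) := le_mul_of_one_le_right ht₀.le (one_le_exp (by linarith))

theorem integral_exp_neg_div_mul_prod_realLi {N : ℕ} (a : Fin N → ℕ) :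
    ∫ t in Ioi 0, exp (-t) / (1 - exp (-t)) * ∏ j, realLi (a j) (1 - exp (-t)) =
      ∑' v : Fin N → ℕ+, 1 / ((∏ j, ((v j : ℕ) : ℝ) ^ a j) * ((∑ j, (v j : ℕ) : ℕ) : ℝ)) := by
  cases N with
  | zero =>
    simp only [Finset.univ_eq_empty, Finset.prod_empty, mul_one]
    simp [integral_undef not_integrableOn_exp_neg_div_one_sub_exp_neg]
  | succ N =>
    set D : (Fin (N + 1) → ℕ+) → ℝ := fun v ↦ ∏ j, ((v j : ℕ) : ℝ) ^ a j
    set M : (Fin (N + 1) → ℕ+) → ℕ := fun v ↦ ∑ j, (v j : ℕ)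
    have hM (v) : 1 ≤ M v :=
      (v 0).pos.trans_le (Finset.single_le_sum (f := fun j ↦ (v j : ℕ)) (fun j _ ↦ Nat.zero_le _)
        (Finset.mem_univ 0))
    have hterm (v) : IntegrableOn (fun t ↦ exp (-t) * (1 - exp (-t)) ^ (M v - 1) / D v) (Ioi 0) :=
      (integrableOn_exp_neg_mul_one_sub_exp_neg_pow _).div_const _
    rw [integral_eq_tsum_integral_of_hasSum_of_nonneg hterm]
    · refine tsum_congr fun v ↦ ?_
      rw [integral_div, integral_exp_neg_mul_one_sub_exp_neg_pow, ← Nat.cast_add_one,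
        Nat.sub_add_cancel (hM v), div_div, mul_comm]
    · intro v
      filter_upwards [ae_restrict_mem measurableSet_Ioi] with t ht
      have hx₀ : 0 ≤ 1 - exp (-t) := by simp [mem_Ioi.1 ht |>.le]
      positivity
    · filter_upwards [ae_restrict_mem measurableSet_Ioi] with t ht
      have hx₀ : 0 < 1 - exp (-t) := by simpa using ht
      refine ((hasSum_prod_realLi a hx₀.le (by simpa using exp_pos (-t))).mul_left
        (exp (-t) / (1 - exp (-t)))).congr_fun fun v ↦ ?_
      change _ = _ * ((1 - exp (-t)) ^ M v / D v)
      rw [← Nat.sub_add_cancel (hM v), pow_succ, Nat.add_sub_cancel]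
      field_simp

theorem xiMT_integrand_eq (r m : ℕ) (k : Fin r → ℕ) {t : ℝ} (ht : 0 < t) :
    (t : ℂ) ^ ((m : ℂ) + 1 - 1) / ((exp t : ℂ) - 1) * ∏ j, Li (k j) (1 - exp (-t)) =
      ((exp (-t) / (1 - exp (-t)) *
        ∏ j, realLi (Fin.append k (fun _ : Fin m ↦ 1) j) (1 - exp (-t)) : ℝ) : ℂ) := by
  have hx₀ : 0 < 1 - exp (-t) := by simpa using ht
  have hLi_one : realLi 1 (1 - exp (-t)) = t := by
    rw [realLi_one (abs_lt.2 ⟨by linarith, by simpa using exp_pos (-t)⟩), sub_sub_cancel,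
      log_exp, neg_neg]
  have hprod : ∏ j, realLi (Fin.append k (fun _ : Fin m ↦ 1) j) (1 - exp (-t)) =
      (∏ j, realLi (k j) (1 - exp (-t))) * t ^ m := by
    simp [Fin.prod_univ_add, hLi_one]
  have hexp : exp (-t) / (1 - exp (-t)) = 1 / (exp t - 1) := by
    rw [exp_neg] at hx₀ ⊢
    field_simp
  rw [hprod, hexp, add_sub_cancel_right, Complex.cpow_natCast]
  push_cast
  ring

theorem stmt_12_general (r : ℕ) (k : Fin r → ℕ) (m : ℕ) :
    xiMT r k (m + 1) =
      (1 / (m.factorial : ℂ)) * zMTn (r + m) (Fin.append k fun _ : Fin m => 1) 1 := by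
  rw [xiMT, Complex.Gamma_nat_eq_factorial,
    setIntegral_congr_fun measurableSet_Ioi fun t ht ↦ xiMT_integrand_eq r m k ht,
    integral_complex_ofReal, integral_exp_neg_div_mul_prod_realLi, zMTn, Complex.ofReal_tsum]
  push_cast
  simp only [pow_one]

theorem stmt_12 (r : ℕ) (k : Fin r → ℕ) (hk : ∀ j, 1 ≤ k j) (m : ℕ) :
    xiMT r k (m + 1) =
      (1 / (m.factorial : ℂ)) * zMTn (r + m) (Fin.append k fun _ : Fin m => 1) 1 :=
  stmt_12_general r k m
end

section
/- For 𝕜 = (k₁,...,k_r,k_{r+1}) ∈ ℕ^r × ℕ₀ with all k_j ≥ 1 for j ≤ r, the function t ↦ Λ_𝕜(1 − e^{−t}) satisfies Λ_𝕜(1−e^{−t}) = O(t^r) as t → 0⁺. -/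
/-!
Every denominator of `Λ` is a natural number, so the series is dominated termwise by
`∑_{m ∈ ℕ₊^r} |z|^{m₁+⋯+m_r} = (|z| / (1 - |z|))^r`. At `z = 1 - e^{-t}` this bound is
`(e^t - 1)^r = O(t^r)`.
-/

open scoped BigOperators

/-- `Λ_{(k₁,…,k_r,k')}(z) = ∑_{m₁,…,m_r ≥ 1} z^{m₁+⋯+m_r} / (m₁^{k₁}⋯m_r^{k_r}(m₁+⋯+m_r)^{k'})`. -/
noncomputable def Lam (r : ℕ) (k : Fin r → ℕ) (k' : ℕ) (z : ℂ) : ℂ :=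
  ∑' m : Fin r → ℕ+,
    z ^ (∑ j, (m j : ℕ)) /
      ((∏ j, ((m j : ℕ) : ℂ) ^ (k j)) * (((∑ j, (m j : ℕ)) : ℕ) : ℂ) ^ k')

open scoped NNReal ENNReal
open Asymptotics Topology

theorem ENNReal.tsum_fin_pi_prod_s16 {α : Type*} :
    ∀ {r : ℕ} (f : Fin r → α → ℝ≥0∞), ∑' m : Fin r → α, ∏ j, f j (m j) = ∏ j, ∑' a, f j a
  | 0, f => by simp
  | r + 1, f => by
    rw [← (Fin.consEquiv fun _ => α).tsum_eq, ENNReal.tsum_prod']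
    simp only [Fin.consEquiv_apply, Fin.prod_univ_succ, Fin.cons_zero, Fin.cons_succ,
      ENNReal.tsum_mul_left, ENNReal.tsum_mul_right, ENNReal.tsum_fin_pi_prod_s16]

theorem ENNReal.tsum_pnat_pow (w : ℝ≥0∞) : ∑' n : ℕ+, w ^ (n : ℕ) = w * (1 - w)⁻¹ := by
  rw [tsum_pnat_eq_tsum_succ (f := fun n => w ^ n), ENNReal.tsum_geometric_add_one]

theorem norm_Lam_summand_le (r : ℕ) (k : Fin r → ℕ) (k' : ℕ) (z : ℂ) (m : Fin r → ℕ+) :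
    ‖z ^ (∑ j, (m j : ℕ)) /
        ((∏ j, ((m j : ℕ) : ℂ) ^ (k j)) * (((∑ j, (m j : ℕ)) : ℕ) : ℂ) ^ k')‖ ≤
      ∏ j, ‖z‖ ^ (m j : ℕ) := by
  have hden : (∏ j, ((m j : ℕ) : ℂ) ^ (k j)) * (((∑ j, (m j : ℕ)) : ℕ) : ℂ) ^ k' =
      (((∏ j, (m j : ℕ) ^ (k j)) * (∑ j, (m j : ℕ)) ^ k' : ℕ) : ℂ) := by
    push_cast
    rfl
  rw [hden, norm_div, Complex.norm_natCast, norm_pow, Finset.prod_pow_eq_pow_sum]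
  -- the denominator vanishes only for `r = 0 < k'`, where the summand is `1 / 0 = 0`
  rcases Nat.eq_zero_or_pos ((∏ j, (m j : ℕ) ^ (k j)) * (∑ j, (m j : ℕ)) ^ k') with h0 | hpos
  · simp [h0]
  · exact div_le_self (by positivity) (by exact_mod_cast hpos)

theorem enorm_Lam_le (r : ℕ) (k : Fin r → ℕ) (k' : ℕ) (z : ℂ) :
    ‖Lam r k k' z‖ₑ ≤ (‖z‖ₑ * (1 - ‖z‖ₑ)⁻¹) ^ r :=
  calc ‖Lam r k k' z‖ₑ ≤ ∑' m : Fin r → ℕ+, ∏ j, ‖z‖ₑ ^ (m j : ℕ) := by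
        refine enorm_tsum_le_tsum_enorm.trans (ENNReal.tsum_le_tsum fun m => ?_)
        rw [← ofReal_norm]
        refine (ENNReal.ofReal_le_ofReal (norm_Lam_summand_le r k k' z m)).trans_eq ?_
        simp [ENNReal.ofReal_prod_of_nonneg, ENNReal.ofReal_pow, ofReal_norm]
    _ = (‖z‖ₑ * (1 - ‖z‖ₑ)⁻¹) ^ r := by
        rw [ENNReal.tsum_fin_pi_prod_s16 fun _ (n : ℕ+) => ‖z‖ₑ ^ (n : ℕ), ENNReal.tsum_pnat_pow,
          Finset.prod_const, Finset.card_univ, Fintype.card_fin]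

theorem norm_Lam_le (r : ℕ) (k : Fin r → ℕ) (k' : ℕ) {z : ℂ} (hz : ‖z‖ < 1) :
    ‖Lam r k k' z‖ ≤ (‖z‖ / (1 - ‖z‖)) ^ r := by
  have h := enorm_Lam_le r k k' z
  rw [← ofReal_norm, ← ofReal_norm, ← ENNReal.ofReal_one,
    ← ENNReal.ofReal_sub _ (norm_nonneg z), ← ENNReal.ofReal_inv_of_pos (by linarith),
    ← ENNReal.ofReal_mul (norm_nonneg z), ← ENNReal.ofReal_pow (by positivity)] at h
  rw [div_eq_mul_inv]
  exact (ENNReal.ofReal_le_ofReal_iff (by positivity)).mp h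

theorem norm_Lam_one_sub_exp_neg_le (r : ℕ) (k : Fin r → ℕ) (k' : ℕ) {t : ℝ} (ht : 0 ≤ t) :
    ‖Lam r k k' (1 - Real.exp (-t))‖ ≤ (Real.exp t - 1) ^ r := by
  have hnorm : ‖(1 - Real.exp (-t) : ℂ)‖ = 1 - Real.exp (-t) := by
    rw [← Complex.ofReal_one, ← Complex.ofReal_sub, Complex.norm_real, Real.norm_of_nonneg]
    linarith [Real.exp_le_one_iff.2 (neg_nonpos.2 ht)]
  have h := norm_Lam_le r k k' (z := 1 - Real.exp (-t))
    (by rw [hnorm]; linarith [Real.exp_pos (-t)])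
  convert h using 2
  rw [hnorm, sub_sub_cancel, Real.exp_neg]
  field_simp

theorem stmt_16_general (r : ℕ) (k : Fin r → ℕ) (k' : ℕ) :
    (fun t : ℝ => Lam r k k' (1 - Real.exp (-t))) =O[nhdsWithin 0 (Set.Ioi 0)]
      fun t : ℝ => (t : ℂ) ^ r := by
  have hLam : (fun t : ℝ => Lam r k k' (1 - Real.exp (-t))) =O[𝓝[>] 0]
      fun t => (Real.exp t - 1) ^ r :=
    IsBigO.of_norm_eventuallyLE <| eventually_nhdsWithin_of_forall fun t ht =>
      norm_Lam_one_sub_exp_neg_le r k k' ht.le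
  have hexp : (fun t : ℝ => Real.exp t - 1) =O[𝓝 0] fun t => t := by
    simpa using (Real.hasDerivAt_exp 0).isBigO_sub
  refine hLam.trans (((hexp.pow r).mono nhdsWithin_le_nhds).trans (isBigO_of_le _ fun t => ?_))
  simp

theorem stmt_16 (r : ℕ) (k : Fin r → ℕ) (hk : ∀ j, 1 ≤ k j) (k' : ℕ) :
    (fun t : ℝ => Lam r k k' (1 - Real.exp (-t))) =O[nhdsWithin 0 (Set.Ioi 0)]
      fun t : ℝ => (t : ℂ) ^ r :=
  stmt_16_general r k k'
end
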